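/- Let k(t) = (1+t^2)^{-3/2}. The Fourier transform k̂ is strictly decreasing on [0,∞), i.e., for 0 ≤ ξ₁ < ξ₂ one has k̂(ξ₂) < k̂(ξ₁). -/

import Mathlib

/-!
Write `k` as a superposition of Gaussians, `Γ(3/2) (1 + t²)^{-3/2} = ∫₀^∞ √s e^{-s} e^{-s t²} ds`.
Taking the Fourier transform under the integral and using `𝓕(e^{-s t²})(ξ) = √(π/s) e^{-π² ξ² / s}`
gives `k̂(ξ) = Γ(3/2)⁻¹ √π ∫₀^∞ e^{-s} e^{-π² ξ² / s} ds` (this is `4πξ K₁(2πξ)`), whose integrand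
is strictly decreasing in `ξ²` for every `s > 0`.
-/

open MeasureTheory

noncomputable def k (t : ℝ) : ℝ := (1 + t ^ 2) ^ (-(3 : ℝ) / 2)

noncomputable def khat (ξ : ℝ) : ℂ :=
  ∫ t : ℝ, Complex.exp ((-(2 * Real.pi * ξ * t) : ℝ) * Complex.I) * (k t : ℂ)

open Real Set FourierTransform Function

theorem setIntegral_lt_setIntegral_of_forall_lt {X : Type*} [MeasurableSpace X] {μ : Measure X}
    {s : Set X} {f g : X → ℝ} (hs : MeasurableSet s) (hμs : μ s ≠ 0)
    (hf : IntegrableOn f s μ) (hg : IntegrableOn g s μ) (hfg : ∀ x ∈ s, f x < g x) :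
    ∫ x in s, f x ∂μ < ∫ x in s, g x ∂μ := by
  rw [← sub_pos, ← integral_sub hg hf]
  change 0 < ∫ x in s, (g - f) x ∂μ
  have hpos : ∀ x ∈ s, 0 < (g - f) x := fun x hx ↦ sub_pos.2 (hfg x hx)
  rw [integral_pos_iff_support_of_nonneg_ae
      ((ae_restrict_iff' hs).2 (.of_forall fun x hx ↦ (hpos x hx).le)) (hg.sub hf),
    Measure.restrict_apply' hs]
  exact (pos_iff_ne_zero.2 hμs).trans_le (measure_mono fun x hx ↦ ⟨(hpos x hx).ne', hx⟩)

theorem fourier_const_mul {V : Type*} [NormedAddCommGroup V] [InnerProductSpace ℝ V]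
    [MeasurableSpace V] [BorelSpace V] [FiniteDimensional ℝ V] (c : ℂ) (f : V → ℂ) (w : V) :
    𝓕 (fun v ↦ c * f v) w = c * 𝓕 f w := by
  simp_rw [Real.fourier_eq, Circle.smul_def, smul_eq_mul, mul_left_comm _ c, integral_const_mul]

theorem fourier_integral_eq_integral_fourier {α E : Type*} [MeasurableSpace α] {μ : Measure α}
    [SFinite μ] [NormedAddCommGroup E] [NormedSpace ℂ E] {F : ℝ → α → E}
    (hF : Integrable (uncurry F) (volume.prod μ)) (ξ : ℝ) :
    𝓕 (fun t ↦ ∫ s, F t s ∂μ) ξ = ∫ s, 𝓕 (fun t ↦ F t s) ξ ∂μ := by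
  simp_rw [Real.fourier_real_eq, Circle.smul_def, ← integral_smul]
  refine integral_integral_swap ?_
  have : Continuous fun t : ℝ ↦ ((𝐞 (-(t * ξ)) : Circle) : ℂ) := by fun_prop
  exact hF.bdd_smul 1 this.aestronglyMeasurable.comp_fst
    (.of_forall fun _ ↦ (Circle.norm_coe _).le)

theorem fourier_exp_neg_mul_sq {s : ℝ} (hs : 0 < s) (ξ : ℝ) :
    𝓕 (fun t : ℝ ↦ (rexp (-s * t ^ 2) : ℂ)) ξ = (√(π / s) * rexp (-(π * ξ) ^ 2 / s) : ℝ) := by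
  rw [fourier_real_eq_integral_exp_smul]
  convert fourierIntegral_gaussian (b := s) (by simpa) (-2 * π * ξ) using 1
  · congr 1 with t
    rw [smul_eq_mul, Complex.ofReal_exp, ← Complex.exp_add, ← Complex.exp_add]
    push_cast
    ring_nf
  · rw [Complex.ofReal_mul, Complex.ofReal_exp, Real.sqrt_eq_rpow,
      Complex.ofReal_cpow (by positivity)]
    push_cast
    congr 2
    field_simp
    ring

theorem integral_sqrt_mul_exp_neg_mul {b : ℝ} (hb : 0 < b) :
    ∫ s in Ioi 0, √s * rexp (-(b * s)) = Gamma (3 / 2) * b ^ (-(3 : ℝ) / 2) := by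
  have h := integral_rpow_mul_exp_neg_mul_Ioi (a := 3 / 2) (by norm_num) hb
  norm_num at h
  simp_rw [Real.sqrt_eq_rpow]
  rw [h, mul_comm, Real.inv_rpow hb.le, ← Real.rpow_neg hb.le]
  norm_num

theorem integrableOn_exp_neg_mul_exp_neg_div {c : ℝ} (hc : 0 ≤ c) :
    IntegrableOn (fun s ↦ rexp (-s) * rexp (-c / s)) (Ioi 0) := by
  refine (exp_neg_integrableOn_Ioi 0 one_pos).mono' (by fun_prop) ?_
  refine (ae_restrict_iff' measurableSet_Ioi).2 (.of_forall fun s (hs : 0 < s) ↦ ?_)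
  rw [norm_of_nonneg (by positivity), neg_one_mul]
  exact mul_le_of_le_one_right (exp_pos _).le
    (exp_le_one_iff.2 (div_nonpos_of_nonpos_of_nonneg (neg_nonpos.2 hc) hs.le))

theorem strictAntiOn_integral_exp_neg_mul_exp_neg_div :
    StrictAntiOn (fun c ↦ ∫ s in Ioi 0, rexp (-s) * rexp (-c / s)) (Ici 0) := by
  intro c₁ (hc₁ : 0 ≤ c₁) c₂ _ hc
  refine setIntegral_lt_setIntegral_of_forall_lt measurableSet_Ioi (by simp)
    (integrableOn_exp_neg_mul_exp_neg_div (hc₁.trans hc.le))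
    (integrableOn_exp_neg_mul_exp_neg_div hc₁) fun s (hs : 0 < s) ↦ ?_
  gcongr

theorem khat_eq_fourier (ξ : ℝ) : khat ξ = 𝓕 (fun t ↦ (k t : ℂ)) ξ := by
  rw [khat, fourier_real_eq_integral_exp_smul]
  congr! 4
  ring_nf

theorem k_eq_integral (t : ℝ) :
    k t = (Gamma (3 / 2))⁻¹ * ∫ s in Ioi 0, √s * rexp (-s) * rexp (-s * t ^ 2) := by
  rw [eq_inv_mul_iff_mul_eq₀ (Gamma_pos_of_pos (by norm_num)).ne', k,
    ← integral_sqrt_mul_exp_neg_mul (by positivity : (0 : ℝ) < 1 + t ^ 2)]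
  congr 1 with s
  rw [mul_assoc, ← exp_add]
  ring_nf

theorem integrable_sqrt_mul_exp_neg_mul_exp_neg_mul_sq :
    Integrable (uncurry fun t s ↦ √s * rexp (-s) * rexp (-s * t ^ 2))
      (volume.prod (volume.restrict (Ioi 0))) := by
  refine (integrable_prod_iff' (by fun_prop)).2 ⟨?_, ?_⟩
  · refine (ae_restrict_iff' measurableSet_Ioi).2 (.of_forall fun s (hs : 0 < s) ↦ ?_)
    exact (integrable_exp_neg_mul_sq hs).const_mul (√s * rexp (-s))
  · refine IntegrableOn.congr_fun ((exp_neg_integrableOn_Ioi 0 one_pos).const_mul √π)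
      (fun s (hs : 0 < s) ↦ ?_) measurableSet_Ioi
    simp only [uncurry_apply_pair]
    rw [integral_congr_ae (.of_forall fun t ↦ norm_of_nonneg (by positivity)), integral_const_mul,
      integral_gaussian, mul_right_comm, ← sqrt_mul hs.le, mul_div_cancel₀ _ hs.ne', neg_one_mul]

theorem fourier_sqrt_mul_exp_neg_mul_exp_neg_mul_sq {s : ℝ} (hs : 0 < s) (ξ : ℝ) :
    𝓕 (fun t ↦ ((√s * rexp (-s) * rexp (-s * t ^ 2) : ℝ) : ℂ)) ξ
      = (√π * (rexp (-s) * rexp (-(π * ξ) ^ 2 / s)) : ℝ) := by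
  simp only [Complex.ofReal_mul (√s * rexp (-s))]
  rw [fourier_const_mul, fourier_exp_neg_mul_sq hs, ← Complex.ofReal_mul, ← mul_assoc,
    mul_right_comm _ (rexp (-s)), ← sqrt_mul hs.le, mul_div_cancel₀ _ hs.ne', mul_assoc]

theorem khat_eq (ξ : ℝ) :
    khat ξ = ((Gamma (3 / 2))⁻¹ * √π * ∫ s in Ioi 0, rexp (-s) * rexp (-(π * ξ) ^ 2 / s) : ℝ) := by
  calc khat ξ = 𝓕 (fun t ↦ (k t : ℂ)) ξ := khat_eq_fourier ξ
    _ = (((Gamma (3 / 2))⁻¹ : ℝ) : ℂ) *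
          𝓕 (fun t ↦ ∫ s in Ioi 0, ((√s * rexp (-s) * rexp (-s * t ^ 2) : ℝ) : ℂ)) ξ := by
      simp_rw [k_eq_integral, Complex.ofReal_mul ((Gamma (3 / 2))⁻¹), ← integral_complex_ofReal]
      exact fourier_const_mul _ _ ξ
    _ = (((Gamma (3 / 2))⁻¹ : ℝ) : ℂ) *
          ∫ s in Ioi 0, ((√π * (rexp (-s) * rexp (-(π * ξ) ^ 2 / s)) : ℝ) : ℂ) := by
      rw [fourier_integral_eq_integral_fourier
        integrable_sqrt_mul_exp_neg_mul_exp_neg_mul_sq.ofReal]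
      exact congrArg _ (setIntegral_congr_fun measurableSet_Ioi
        fun s hs ↦ fourier_sqrt_mul_exp_neg_mul_exp_neg_mul_sq hs ξ)
    _ = _ := by
      rw [integral_complex_ofReal, integral_const_mul, ← Complex.ofReal_mul, mul_assoc]

/-- `k̂` is strictly decreasing on `[0, ∞)`. -/
theorem khat_strictAnti : ∀ ξ₁ ξ₂ : ℝ, 0 ≤ ξ₁ → ξ₁ < ξ₂ → (khat ξ₂).re < (khat ξ₁).re := by
  intro ξ₁ ξ₂ hξ₁ hξ
  rw [khat_eq, khat_eq, Complex.ofReal_re, Complex.ofReal_re]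
  gcongr
  refine strictAntiOn_integral_exp_neg_mul_exp_neg_div (mem_Ici.2 (sq_nonneg _))
    (mem_Ici.2 (sq_nonneg _)) ?_
  gcongr
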